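/- Let P ⊂ ℝ³ be a finite point cloud, 𝐱 and 𝐲 regular knot vectors, and w_u : ℝ² → [0,∞) a family of weight functions with all relevant denominators positive. Fix μ with p_x+1 ≤ μ ≤ n_x and ν with p_y+1 ≤ ν ≤ n_y, and suppose (x,y) ∈ [x_μ, x_{μ+1}) × [y_ν, y_{ν+1}). Let P_{μ,ν} := ⋃_{i=μ−p_x}^{μ} ⋃_{j=ν−p_y}^{ν} supp(w_{(ξ_x^{(i)},ξ_y^{(j)})}) ∩ P. Then α(μ,ν) ≤ f_w(x,y) ≤ β(μ,ν), where α(μ,ν) := min{ z : (x,y,z) ∈ P_{μ,ν} } and β(μ,ν) := max{ z : (x,y,z) ∈ P_{μ,ν} }, and α(μ,ν), β(μ,ν) ∈ [z_min, z_max] whenever z_min ≤ z ≤ z_max for all (x,y,z) ∈ P. -/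
import Mathlib


/-- Univariate B-spline of degree `p` with local knot vector `t i, …, t (i+p+1)`,
defined by the Cox–de Boor recursion (with the convention `0/0 = 0`, which is
automatic for real division in Lean). -/
noncomputable def Bspline (t : ℕ → ℝ) : ℕ → ℕ → ℝ → ℝ
  | 0, i, x => if t i ≤ x ∧ x < t (i + 1) then 1 else 0
  | p + 1, i, x =>
      (x - t i) / (t (i + p + 1) - t i) * Bspline t p i x +
        (t (i + p + 2) - x) / (t (i + p + 2) - t (i + 1)) * Bspline t p (i + 1) x

/-- The `i`-th knot average `ξ⁽ⁱ⁾ = (t_{i+1} + … + t_{i+p}) / p`. -/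
noncomputable def knotAvg (t : ℕ → ℝ) (p i : ℕ) : ℝ :=
  (∑ j ∈ Finset.Icc (i + 1) (i + p), t j) / p

/-- Control point estimator `ẑ_w(u)` of a point cloud `P ⊂ ℝ³` with weight family
`w : ℝ² → ℝ² → [0, ∞)` (a point `q ∈ P` is `(x, y, z) = (q.1, q.2.1, q.2.2)`). -/
noncomputable def ctrlEst2 (P : Finset (ℝ × ℝ × ℝ)) (w : ℝ × ℝ → ℝ × ℝ → ℝ)
    (u : ℝ × ℝ) : ℝ :=
  (∑ q ∈ P, q.2.2 * w u (q.1, q.2.1)) / (∑ q ∈ P, w u (q.1, q.2.1))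

/-- The bivariate (tensor-product) weighted quasi-interpolant spline approximation of
bi-degree `(px, py)` to the point cloud `P ⊂ ℝ³` over the knot vectors `tx, ty`. -/
noncomputable def wQISA2 (P : Finset (ℝ × ℝ × ℝ)) (px py nx ny : ℕ) (tx ty : ℕ → ℝ)
    (w : ℝ × ℝ → ℝ × ℝ → ℝ) (x y : ℝ) : ℝ :=
  ∑ i ∈ Finset.Icc 1 nx, ∑ j ∈ Finset.Icc 1 ny,
    ctrlEst2 P w (knotAvg tx px i, knotAvg ty py j) * (Bspline tx px i x * Bspline ty py j y)

/-- The set of `z`-values of the points of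
`P_{μ,ν} = ⋃_{i=μ-px}^{μ} ⋃_{j=ν-py}^{ν} supp(w_{(ξₓ⁽ⁱ⁾, ξ_y⁽ʲ⁾)}) ∩ P`,
where the support of a weight function is the closure of the set where it is nonzero. -/
def PmunuZ (P : Finset (ℝ × ℝ × ℝ)) (tx ty : ℕ → ℝ) (w : ℝ × ℝ → ℝ × ℝ → ℝ)
    (px py μ ν : ℕ) : Set ℝ :=
  {z | ∃ x y, (x, y, z) ∈ P ∧ ∃ i j, μ - px ≤ i ∧ i ≤ μ ∧ ν - py ≤ j ∧ j ≤ ν ∧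
    (x, y) ∈ closure {v : ℝ × ℝ | w (knotAvg tx px i, knotAvg ty py j) v ≠ 0}}

lemma Bspline_support (t : ℕ → ℝ) (x : ℝ) :
    ∀ p i, (∀ j, i ≤ j → j ≤ i + p → t j ≤ t (j + 1)) →
    (x < t i ∨ t (i + p + 1) ≤ x) → Bspline t p i x = 0 := by
  intro p
  induction p with
  | zero =>
    intro i _ h
    simp only [Bspline]
    rw [if_neg]
    rintro ⟨h1, h2⟩
    rcases h with h | h
    · linarith
    · simp only [Nat.add_zero] at h; linarith
  | succ p ih =>
    intro i hm h
    rw [show i + (p+1) + 1 = i + p + 2 from by omega] at h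
    simp only [Bspline]
    have h1 : Bspline t p i x = 0 := by
      apply ih i (fun j hj1 hj2 => hm j hj1 (by omega))
      rcases h with h | h
      · exact Or.inl h
      · right
        have h2 := hm (i + p + 1) (by omega) (by omega)
        rw [show i + p + 1 + 1 = i + p + 2 from by omega] at h2
        linarith
    have h2 : Bspline t p (i + 1) x = 0 := by
      apply ih (i+1) (fun j hj1 hj2 => hm j (by omega) (by omega))
      rcases h with h | h
      · left
        have := hm i (le_refl i) (by omega)
        linarith
      · right
        have : i + 1 + p + 1 = i + p + 2 := by omega
        rw [this]; exact h
    rw [h1, h2]; ring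

lemma Bspline_nonneg (t : ℕ → ℝ) (x : ℝ) :
    ∀ p i, (∀ j, i ≤ j → j ≤ i + p → t j ≤ t (j + 1)) →
    0 ≤ Bspline t p i x := by
  intro p
  induction p with
  | zero =>
    intro i _
    simp only [Bspline]
    split <;> norm_num
  | succ p ih =>
    intro i hm
    simp only [Bspline]
    have hA : 0 ≤ (x - t i) / (t (i + p + 1) - t i) * Bspline t p i x := by
      rcases eq_or_lt_of_le (ih i (fun j hj1 hj2 => hm j hj1 (by omega))) with h | h
      · rw [← h]; ring_nf; simp
      · have hsupp : ¬ (x < t i ∨ t (i + p + 1) ≤ x) := by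
          intro hc
          have := Bspline_support t x p i (fun j hj1 hj2 => hm j hj1 (by omega)) hc
          linarith
        push_neg at hsupp
        apply mul_nonneg _ h.le
        apply div_nonneg <;> linarith [hsupp.1, hsupp.2]
    have hB : 0 ≤ (t (i + p + 2) - x) / (t (i + p + 2) - t (i + 1)) * Bspline t p (i + 1) x := by
      rcases eq_or_lt_of_le (ih (i+1) (fun j hj1 hj2 => hm j (by omega) (by omega))) with h | h
      · rw [← h]; ring_nf; simp
      · have hsupp : ¬ (x < t (i+1) ∨ t (i + 1 + p + 1) ≤ x) := by
          intro hc
          have := Bspline_support t x p (i+1) (fun j hj1 hj2 => hm j (by omega) (by omega)) hc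
          linarith
        push_neg at hsupp
        have he : i + 1 + p + 1 = i + p + 2 := by omega
        rw [he] at hsupp
        apply mul_nonneg _ h.le
        apply div_nonneg <;> linarith [hsupp.1, hsupp.2]
    linarith

lemma Bspline_partition (t : ℕ → ℝ) (x : ℝ) :
    ∀ p μ, p + 1 ≤ μ → (∀ j, μ - p ≤ j → j ≤ μ + p → t j ≤ t (j + 1)) →
    t μ ≤ x → x < t (μ + 1) →
    ∑ i ∈ Finset.Icc (μ - p) μ, Bspline t p i x = 1 := by
  intro p
  induction p with
  | zero =>
    intro μ _ _ hx1 hx2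
    simp only [Nat.sub_zero, Finset.Icc_self, Finset.sum_singleton, Bspline]
    rw [if_pos ⟨hx1, hx2⟩]
  | succ p ih =>
    intro μ hμ hm hx1 hx2
    simp only [Bspline]
    rw [Finset.sum_add_distrib]
    have hre : ∑ i ∈ Finset.Icc (μ-(p+1)) μ,
        (t (i + p + 2) - x) / (t (i + p + 2) - t (i + 1)) * Bspline t p (i + 1) x
        = ∑ k ∈ Finset.Icc (μ-p) (μ+1),
        (t (k + p + 1) - x) / (t (k + p + 1) - t k) * Bspline t p k x := by
      rw [show Finset.Icc (μ-p) (μ+1)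
          = Finset.map (addRightEmbedding 1) (Finset.Icc (μ-(p+1)) μ) from by
        rw [Finset.map_add_right_Icc]; congr 1; omega]
      rw [Finset.sum_map]
      apply Finset.sum_congr rfl
      intro i _
      simp only [addRightEmbedding_apply]
      rw [show i + 1 + p + 1 = i + p + 2 from by omega]
    rw [hre]
    have hA : ∑ i ∈ Finset.Icc (μ-(p+1)) μ,
        (x - t i) / (t (i + p + 1) - t i) * Bspline t p i x
        = ∑ i ∈ Finset.Icc (μ-p) μ,
        (x - t i) / (t (i + p + 1) - t i) * Bspline t p i x := by
      symm
      apply Finset.sum_subset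
      · intro i hi; simp only [Finset.mem_Icc] at *; omega
      · intro i hi1 hi2
        simp only [Finset.mem_Icc] at hi1 hi2
        have hieq : i = μ - (p+1) := by omega
        have : Bspline t p i x = 0 := by
          apply Bspline_support t x p i (fun j hj1 hj2 => hm j (by omega) (by omega))
          right
          rw [show i + p + 1 = μ from by omega]
          exact hx1
        rw [this]; ring
    have hD : ∑ k ∈ Finset.Icc (μ-p) (μ+1),
        (t (k + p + 1) - x) / (t (k + p + 1) - t k) * Bspline t p k x
        = ∑ k ∈ Finset.Icc (μ-p) μ,
        (t (k + p + 1) - x) / (t (k + p + 1) - t k) * Bspline t p k x := by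
      symm
      apply Finset.sum_subset
      · intro i hi; simp only [Finset.mem_Icc] at *; omega
      · intro k hk1 hk2
        simp only [Finset.mem_Icc] at hk1 hk2
        have hkeq : k = μ + 1 := by omega
        have : Bspline t p k x = 0 := by
          apply Bspline_support t x p k (fun j hj1 hj2 => hm j (by omega) (by omega))
          left; rw [hkeq]; exact hx2
        rw [this]; ring
    rw [hA, hD, ← Finset.sum_add_distrib]
    have hAD : ∀ i ∈ Finset.Icc (μ-p) μ,
        (x - t i) / (t (i + p + 1) - t i) * Bspline t p i x
        + (t (i + p + 1) - x) / (t (i + p + 1) - t i) * Bspline t p i x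
        = Bspline t p i x := by
      intro i hi
      simp only [Finset.mem_Icc] at hi
      by_cases hB : Bspline t p i x = 0
      · rw [hB]; ring
      · have hsupp : ¬ (x < t i ∨ t (i + p + 1) ≤ x) := fun hc =>
          hB (Bspline_support t x p i (fun j hj1 hj2 => hm j (by omega) (by omega)) hc)
        push_neg at hsupp
        have hd : t (i + p + 1) - t i > 0 := by linarith [hsupp.1, hsupp.2]
        field_simp
        ring
    rw [Finset.sum_congr rfl hAD]
    exact ih μ (by omega) (fun j hj1 hj2 => hm j (by omega) (by omega)) hx1 hx2

lemma mono_chain (t : ℕ → ℝ) (m : ℕ) (h : ∀ j, 1 ≤ j → j ≤ m → t j ≤ t (j + 1)) :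
    ∀ a b, 1 ≤ a → a ≤ b → b ≤ m + 1 → t a ≤ t b := by
  intro a b ha hab hb
  induction b with
  | zero => exfalso; omega
  | succ b ihb =>
    rcases Nat.lt_or_ge a (b+1) with hlt | hge
    · have h1 : t a ≤ t b := ihb (by omega) (by omega)
      have h2 : t b ≤ t (b+1) := h b (by omega) (by omega)
      linarith
    · have : a = b + 1 := by omega
      rw [this]


/-- **Local bounds for the bivariate wQISA.** For
`(x, y) ∈ [x_μ, x_{μ+1}) × [y_ν, y_{ν+1})` with `px+1 ≤ μ ≤ nx` and `py+1 ≤ ν ≤ ny`,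
the wQISA value is bounded by `α(μ,ν) = min` and `β(μ,ν) = max` of the `z`-values of
the points of `P_{μ,ν}`; moreover `α(μ,ν), β(μ,ν) ∈ [zmin, zmax]` whenever
`zmin ≤ z ≤ zmax` on all of `P`. -/
theorem wQISA2_local_bounds
    (P : Finset (ℝ × ℝ × ℝ)) (px py nx ny : ℕ) (hpx : 0 < px) (hpy : 0 < py)
    (tx ty : ℕ → ℝ)
    -- the knot vectors are non-decreasing
    (hmonox : ∀ j, 1 ≤ j → j ≤ nx + px → tx j ≤ tx (j + 1))
    (hmonoy : ∀ j, 1 ≤ j → j ≤ ny + py → ty j ≤ ty (j + 1))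
    -- `(px+1)`-regularity of `tx`
    (hnx : px + 1 ≤ nx)
    (hregx1 : tx 1 = tx (px + 1)) (hregx2 : tx (nx + 1) = tx (nx + px + 1))
    (hregx3 : ∀ j, 1 ≤ j → j ≤ nx → tx j < tx (j + px + 1))
    -- `(py+1)`-regularity of `ty`
    (hny : py + 1 ≤ ny)
    (hregy1 : ty 1 = ty (py + 1)) (hregy2 : ty (ny + 1) = ty (ny + py + 1))
    (hregy3 : ∀ j, 1 ≤ j → j ≤ ny → ty j < ty (j + py + 1))
    -- nonnegative weight family with positive total weight at every knot average
    (w : ℝ × ℝ → ℝ × ℝ → ℝ) (hw : ∀ u v, 0 ≤ w u v)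
    (hpos : ∀ i ∈ Finset.Icc 1 nx, ∀ j ∈ Finset.Icc 1 ny,
      0 < ∑ q ∈ P, w (knotAvg tx px i, knotAvg ty py j) (q.1, q.2.1))
    (μ ν : ℕ) (hμ1 : px + 1 ≤ μ) (hμ2 : μ ≤ nx) (hν1 : py + 1 ≤ ν) (hν2 : ν ≤ ny)
    (x y : ℝ) (hx1 : tx μ ≤ x) (hx2 : x < tx (μ + 1))
    (hy1 : ty ν ≤ y) (hy2 : y < ty (ν + 1)) :
    (sInf (PmunuZ P tx ty w px py μ ν) ≤ wQISA2 P px py nx ny tx ty w x y ∧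
      wQISA2 P px py nx ny tx ty w x y ≤ sSup (PmunuZ P tx ty w px py μ ν)) ∧
    ∀ zmin zmax : ℝ, (∀ q ∈ P, zmin ≤ q.2.2 ∧ q.2.2 ≤ zmax) →
      zmin ≤ sInf (PmunuZ P tx ty w px py μ ν) ∧
        sSup (PmunuZ P tx ty w px py μ ν) ≤ zmax := by
  set S := PmunuZ P tx ty w px py μ ν with hS
  -- chained monotonicity
  have hMx : ∀ a b, 1 ≤ a → a ≤ b → b ≤ nx + px + 1 → tx a ≤ tx b :=
    mono_chain tx (nx + px) hmonox
  have hMy : ∀ a b, 1 ≤ a → a ≤ b → b ≤ ny + py + 1 → ty a ≤ ty b :=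
    mono_chain ty (ny + py) hmonoy
  -- membership in S
  have hmem : ∀ i, μ - px ≤ i → i ≤ μ → ∀ j, ν - py ≤ j → j ≤ ν →
      ∀ q ∈ P, w (knotAvg tx px i, knotAvg ty py j) (q.1, q.2.1) ≠ 0 → q.2.2 ∈ S := by
    intro i hi1 hi2 j hj1 hj2 q hq hne
    refine ⟨q.1, q.2.1, by simpa using hq, i, j, hi1, hi2, hj1, hj2, subset_closure hne⟩
  -- S is finite and nonempty
  have hSsub : S ⊆ ↑(P.image fun q => q.2.2) := by
    rintro z ⟨a, b, hP, _⟩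
    simp only [Finset.coe_image, Set.mem_image, Finset.mem_coe]
    exact ⟨(a, b, z), hP, rfl⟩
  have hSfin : S.Finite := Set.Finite.subset (Finset.finite_toSet _) hSsub
  have hSne : S.Nonempty := by
    have hp := hpos μ (Finset.mem_Icc.mpr ⟨by omega, hμ2⟩) ν (Finset.mem_Icc.mpr ⟨by omega, hν2⟩)
    obtain ⟨q, hq, hne⟩ := Finset.exists_ne_zero_of_sum_ne_zero hp.ne'
    exact ⟨q.2.2, hmem μ (by omega) le_rfl ν (by omega) le_rfl q hq hne⟩
  have hbddA : BddAbove S := hSfin.bddAbove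
  have hbddB : BddBelow S := hSfin.bddBelow
  -- control point estimates lie in [sInf S, sSup S]
  have hctrl : ∀ i, 1 ≤ i → i ≤ nx → μ - px ≤ i → i ≤ μ →
      ∀ j, 1 ≤ j → j ≤ ny → ν - py ≤ j → j ≤ ν →
      sInf S ≤ ctrlEst2 P w (knotAvg tx px i, knotAvg ty py j) ∧
      ctrlEst2 P w (knotAvg tx px i, knotAvg ty py j) ≤ sSup S := by
    intro i hi1 hi2 hi3 hi4 j hj1 hj2 hj3 hj4
    set u : ℝ × ℝ := (knotAvg tx px i, knotAvg ty py j) with hu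
    have hW : 0 < ∑ q ∈ P, w u (q.1, q.2.1) :=
      hpos i (Finset.mem_Icc.mpr ⟨hi1, hi2⟩) j (Finset.mem_Icc.mpr ⟨hj1, hj2⟩)
    have hup : ∑ q ∈ P, q.2.2 * w u (q.1, q.2.1) ≤ ∑ q ∈ P, sSup S * w u (q.1, q.2.1) := by
      apply Finset.sum_le_sum
      intro q hq
      by_cases hne : w u (q.1, q.2.1) = 0
      · rw [hne]; simp
      · exact mul_le_mul_of_nonneg_right
          (le_csSup hbddA (hmem i hi3 hi4 j hj3 hj4 q hq hne)) (hw _ _)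
    have hlo : ∑ q ∈ P, sInf S * w u (q.1, q.2.1) ≤ ∑ q ∈ P, q.2.2 * w u (q.1, q.2.1) := by
      apply Finset.sum_le_sum
      intro q hq
      by_cases hne : w u (q.1, q.2.1) = 0
      · rw [hne]; simp
      · exact mul_le_mul_of_nonneg_right
          (csInf_le hbddB (hmem i hi3 hi4 j hj3 hj4 q hq hne)) (hw _ _)
    rw [← Finset.mul_sum] at hup hlo
    constructor
    · rw [ctrlEst2, le_div_iff₀ hW]; exact hlo
    · rw [ctrlEst2, div_le_iff₀ hW]; exact hup
  -- B-spline facts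
  have hBxnn : ∀ i, 1 ≤ i → i ≤ nx → 0 ≤ Bspline tx px i x := fun i hi1 hi2 =>
    Bspline_nonneg tx x px i (fun j hj1 hj2 => hmonox j (by omega) (by omega))
  have hBynn : ∀ j, 1 ≤ j → j ≤ ny → 0 ≤ Bspline ty py j y := fun j hj1 hj2 =>
    Bspline_nonneg ty y py j (fun k hk1 hk2 => hmonoy k (by omega) (by omega))
  have hBxsupp : ∀ i, 1 ≤ i → i ≤ nx → ¬(μ - px ≤ i ∧ i ≤ μ) → Bspline tx px i x = 0 := by
    intro i hi1 hi2 hni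
    apply Bspline_support tx x px i (fun j hj1 hj2 => hmonox j (by omega) (by omega))
    rcases Nat.lt_or_ge i (μ - px) with hlt | hge
    · right
      exact le_trans (hMx (i + px + 1) μ (by omega) (by omega) (by omega)) hx1
    · left
      have : μ < i := by omega
      exact lt_of_lt_of_le hx2 (hMx (μ + 1) i (by omega) (by omega) (by omega))
  have hBysupp : ∀ j, 1 ≤ j → j ≤ ny → ¬(ν - py ≤ j ∧ j ≤ ν) → Bspline ty py j y = 0 := by
    intro j hj1 hj2 hnj
    apply Bspline_support ty y py j (fun k hk1 hk2 => hmonoy k (by omega) (by omega))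
    rcases Nat.lt_or_ge j (ν - py) with hlt | hge
    · right
      exact le_trans (hMy (j + py + 1) ν (by omega) (by omega) (by omega)) hy1
    · left
      have : ν < j := by omega
      exact lt_of_lt_of_le hy2 (hMy (ν + 1) j (by omega) (by omega) (by omega))
  have hBxsum : ∑ i ∈ Finset.Icc 1 nx, Bspline tx px i x = 1 := by
    rw [← Bspline_partition tx x px μ hμ1 (fun j hj1 hj2 => hmonox j (by omega) (by omega))
      hx1 hx2]
    symm
    apply Finset.sum_subset
    · intro i hi; simp only [Finset.mem_Icc] at *; omega
    · intro i hi1 hi2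
      simp only [Finset.mem_Icc] at hi1 hi2
      exact hBxsupp i hi1.1 hi1.2 (by omega)
  have hBysum : ∑ j ∈ Finset.Icc 1 ny, Bspline ty py j y = 1 := by
    rw [← Bspline_partition ty y py ν hν1 (fun j hj1 hj2 => hmonoy j (by omega) (by omega))
      hy1 hy2]
    symm
    apply Finset.sum_subset
    · intro j hj; simp only [Finset.mem_Icc] at *; omega
    · intro j hj1 hj2
      simp only [Finset.mem_Icc] at hj1 hj2
      exact hBysupp j hj1.1 hj1.2 (by omega)
  -- the constant sums
  have hconst : ∀ s : ℝ, ∑ i ∈ Finset.Icc 1 nx, ∑ j ∈ Finset.Icc 1 ny,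
      s * (Bspline tx px i x * Bspline ty py j y) = s := by
    intro s
    simp only [← mul_assoc, ← Finset.mul_sum, hBysum, mul_one]
    rw [hBxsum, mul_one]
  -- per-term bounds
  have hterm : ∀ i ∈ Finset.Icc 1 nx, ∀ j ∈ Finset.Icc 1 ny,
      sInf S * (Bspline tx px i x * Bspline ty py j y) ≤
        ctrlEst2 P w (knotAvg tx px i, knotAvg ty py j)
          * (Bspline tx px i x * Bspline ty py j y) ∧
      ctrlEst2 P w (knotAvg tx px i, knotAvg ty py j)
          * (Bspline tx px i x * Bspline ty py j y) ≤
        sSup S * (Bspline tx px i x * Bspline ty py j y) := by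
    intro i hi j hj
    simp only [Finset.mem_Icc] at hi hj
    by_cases hB : Bspline tx px i x * Bspline ty py j y = 0
    · rw [hB]; simp
    · have hix : μ - px ≤ i ∧ i ≤ μ := by
        by_contra hc
        exact hB (by rw [hBxsupp i hi.1 hi.2 hc]; ring)
      have hjy : ν - py ≤ j ∧ j ≤ ν := by
        by_contra hc
        exact hB (by rw [hBysupp j hj.1 hj.2 hc]; ring)
      have hBnn : 0 ≤ Bspline tx px i x * Bspline ty py j y :=
        mul_nonneg (hBxnn i hi.1 hi.2) (hBynn j hj.1 hj.2)
      obtain ⟨hc1, hc2⟩ := hctrl i hi.1 hi.2 hix.1 hix.2 j hj.1 hj.2 hjy.1 hjy.2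
      exact ⟨mul_le_mul_of_nonneg_right hc1 hBnn, mul_le_mul_of_nonneg_right hc2 hBnn⟩
  constructor
  · constructor
    · have h1 : ∑ i ∈ Finset.Icc 1 nx, ∑ j ∈ Finset.Icc 1 ny,
          sInf S * (Bspline tx px i x * Bspline ty py j y)
          ≤ wQISA2 P px py nx ny tx ty w x y := by
        unfold wQISA2
        apply Finset.sum_le_sum
        intro i hi
        apply Finset.sum_le_sum
        intro j hj
        exact (hterm i hi j hj).1
      rwa [hconst] at h1
    · have h1 : wQISA2 P px py nx ny tx ty w x y
          ≤ ∑ i ∈ Finset.Icc 1 nx, ∑ j ∈ Finset.Icc 1 ny,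
            sSup S * (Bspline tx px i x * Bspline ty py j y) := by
        unfold wQISA2
        apply Finset.sum_le_sum
        intro i hi
        apply Finset.sum_le_sum
        intro j hj
        exact (hterm i hi j hj).2
      rwa [hconst] at h1
  · intro zmin zmax hbd
    constructor
    · apply le_csInf hSne
      rintro z ⟨a, b, hP, _⟩
      exact (hbd (a, b, z) hP).1
    · apply csSup_le hSne
      rintro z ⟨a, b, hP, _⟩
      exact (hbd (a, b, z) hP).2
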